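/- Let H be a complex Hilbert space and let A be a bounded self-adjoint positive operator on H. Then for every ξ ∈ H and every t ≥ 0, ‖ξ − e^{−tA}ξ‖² ≤ t · ‖A^{1/2}ξ‖², where e^{−tA} and A^{1/2} are defined via the continuous functional calculus for A. -/

import Mathlib

/-! With `g x = 1 - e^{-tx}` we have `ξ - e^{-tA} ξ = g(A) ξ`, and for real `f` the functional
calculus gives `‖f(A) ξ‖² = re ⟪f(A)² ξ, ξ⟫`. Hence it suffices that `g(A)² ≤ t (A^{1/2})² = t A`
in the Loewner order, which by monotonicity of the functional calculus reduces to the scalar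
inequality `(1 - e^{-y})² ≤ 1 - e^{-y} ≤ y` for `y = t x ≥ 0` on the (nonnegative) spectrum. -/

open Matrix
open scoped BigOperators Classical ComplexOrder

namespace QPaper

variable {ι : Type*} [Fintype ι] [DecidableEq ι]

/-- The positive semidefinite square root of a matrix (junk value `0` if the matrix is
not positive semidefinite). -/
noncomputable def psdSqrt (X : Matrix ι ι ℂ) : Matrix ι ι ℂ :=
  if h : X.PosSemidef then
    h.1.eigenvectorUnitary.1 * diagonal ((↑) ∘ (Real.sqrt ∘ h.1.eigenvalues)) *
      (star h.1.eigenvectorUnitary : Matrix ι ι ℂ)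
  else 0

/-- The normalized trace (Schatten 1) norm `‖X‖₁ = tr |X| / card ι`. -/
noncomputable def normOne (X : Matrix ι ι ℂ) : ℝ :=
  (psdSqrt (Xᴴ * X)).trace.re / Fintype.card ι

/-- The normalized Schatten 2 norm `‖X‖₂ = (tr (X* X) / card ι)^{1/2}`. -/
noncomputable def normTwo (X : Matrix ι ι ℂ) : ℝ :=
  Real.sqrt ((Xᴴ * X).trace.re / Fintype.card ι)

/-- The operator norm of a matrix, acting on the Euclidean space. -/
noncomputable def opNorm (X : Matrix ι ι ℂ) : ℝ :=
  ‖Matrix.toEuclideanCLM (𝕜 := ℂ) X‖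

/-- The Loewner order: `X ≤ Y` iff `Y - X` is positive semidefinite. -/
def LoewnerLE (X Y : Matrix ι ι ℂ) : Prop := (Y - X).PosSemidef

/-- Configurations of `n` qubits. -/
abbrev QState (n : ℕ) := Fin n → Fin 2

/-- The algebra of `n`-qubit observables `M₂(ℂ)^{⊗ n}`. -/
abbrev Obs (n : ℕ) := Matrix (QState n) (QState n) ℂ

/-- The conditional expectation `E_S = ⊗_{j ∈ S} (½ tr)(·) 𝟏 ⊗ id` replacing each qubit in `S`
by its normalized partial trace:  `E_S(A) = 2^{-|S|} tr_S(A) ⊗ 𝟏_S`. -/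
noncomputable def ESet {n : ℕ} (S : Finset (Fin n)) (A : Obs n) : Obs n :=
  Matrix.of fun x y =>
    if ∀ j ∈ S, x j = y j then
      ((2 : ℂ) ^ n)⁻¹ *
        ∑ z : QState n,
          A (fun j => if j ∈ S then z j else x j) (fun j => if j ∈ S then z j else y j)
    else 0

/-- The derivation `d_j = 𝕀^{⊗(j-1)} ⊗ (𝕀 - ½ tr(·) 𝟏) ⊗ 𝕀^{⊗(n-j)}`. -/
noncomputable def dCoord {n : ℕ} (j : Fin n) (A : Obs n) : Obs n := A - ESet {j} A

/-- The quantum depolarizing semigroup `P_t = (e^{-t} 𝕀 + (1 - e^{-t}) ½ tr(·) 𝟏)^{⊗ n}`. -/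
noncomputable def Pt {n : ℕ} (t : ℝ) (A : Obs n) : Obs n :=
  ∑ S : Finset (Fin n),
    (Real.exp (-t) ^ (n - S.card) * (1 - Real.exp (-t)) ^ S.card) • ESet S A

/-- The generator `𝓛 = ∑_j d_j`. -/
noncomputable def Lgen {n : ℕ} (A : Obs n) : Obs n := ∑ j : Fin n, dCoord j A

/-- The carré du champ `Γ(A) = ½ (𝓛(A*) A + A* 𝓛(A) - 𝓛(A* A))`. -/
noncomputable def carre {n : ℕ} (A : Obs n) : Obs n :=
  (2 : ℂ)⁻¹ • (Lgen Aᴴ * A + Aᴴ * Lgen A - Lgen (Aᴴ * A))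

/-- The total `L¹`-influence `Inf¹(A) = ∑_j ‖d_j A‖₁`. -/
noncomputable def inf1 {n : ℕ} (A : Obs n) : ℝ := ∑ j : Fin n, normOne (dCoord j A)

/-- The total `L²`-influence `Inf²(A) = ∑_j ‖d_j A‖₂²`. -/
noncomputable def inf2 {n : ℕ} (A : Obs n) : ℝ := ∑ j : Fin n, normTwo (dCoord j A) ^ 2

/-- The mean part `2^{-n} tr(A) 𝟏`. -/
noncomputable def meanPart {n : ℕ} (A : Obs n) : Obs n :=
  (A.trace / (2 : ℂ) ^ n) • (1 : Obs n)

/-- The variance `Var(A) = ‖A - 2^{-n} tr(A) 𝟏‖₂²`. -/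
noncomputable def Var {n : ℕ} (A : Obs n) : ℝ := normTwo (A - meanPart A) ^ 2

open Real in
lemma one_sub_exp_neg_sq_le {y : ℝ} (hy : 0 ≤ y) : (1 - exp (-y)) ^ 2 ≤ y := by
  have h_le_one : exp (-y) ≤ 1 := exp_le_one_iff.mpr (neg_nonpos.mpr hy)
  have h_tangent : 1 - exp (-y) ≤ y := by linarith [add_one_le_exp (-y)]
  nlinarith [exp_pos (-y)]

section

variable {𝕜 E : Type*} [RCLike 𝕜] [NormedAddCommGroup E] [InnerProductSpace 𝕜 E]

lemma _root_.ContinuousLinearMap.re_inner_apply_self_mono {S T : E →L[𝕜] E} (h : S ≤ T)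
    (x : E) :
    RCLike.re (inner 𝕜 (S x) x) ≤ RCLike.re (inner 𝕜 (T x) x) := by
  have := h.re_inner_nonneg_left x
  rw [_root_.sub_apply, inner_sub_left, map_sub] at this
  linarith

variable [CompleteSpace E]

lemma _root_.ContinuousLinearMap.norm_apply_sq_le_of_star_mul_self_le {S T : E →L[𝕜] E}
    {c : ℝ} (h : star S * S ≤ (c : 𝕜) • (star T * T)) (x : E) : ‖S x‖ ^ 2 ≤ c * ‖T x‖ ^ 2 := by
  have := ContinuousLinearMap.re_inner_apply_self_mono h x
  rw [_root_.smul_apply, inner_smul_left, RCLike.conj_ofReal, RCLike.re_ofReal_mul] at this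
  rw [S.apply_norm_sq_eq_inner_adjoint_left, T.apply_norm_sq_eq_inner_adjoint_left]
  exact this

end

section

variable {H : Type*} [NormedAddCommGroup H] [InnerProductSpace ℂ H] [CompleteSpace H]

lemma norm_cfc_apply_sq_le {a : H →L[ℂ] H} {f g : ℝ → ℝ} {c : ℝ}
    (hfg : ∀ x ∈ spectrum ℝ a, f x ^ 2 ≤ c * g x ^ 2)
    (hf : ContinuousOn f (spectrum ℝ a) := by cfc_cont_tac)
    (hg : ContinuousOn g (spectrum ℝ a) := by cfc_cont_tac) (ha : IsSelfAdjoint a := by cfc_tac)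
    (ξ : H) : ‖cfc f a ξ‖ ^ 2 ≤ c * ‖cfc g a ξ‖ ^ 2 := by
  refine ContinuousLinearMap.norm_apply_sq_le_of_star_mul_self_le ?_ ξ
  rw [(cfc_predicate f a).star_eq, (cfc_predicate g a).star_eq, ← sq, ← sq, ← cfc_pow f 2 a,
    ← cfc_pow g 2 a, ← RCLike.real_smul_eq_coe_smul, ← cfc_smul c (fun x ↦ g x ^ 2) a]
  exact cfc_mono hfg

end

/-- If `A` is a bounded positive self-adjoint operator on a complex Hilbert space `H`, then
for every `ξ ∈ H` and `t ≥ 0`, `‖ξ − e^{−tA} ξ‖² ≤ t ‖A^{1/2} ξ‖²`, where `e^{−tA}` and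
`A^{1/2}` are defined via the continuous functional calculus. -/
theorem exp_sqrt_bound {H : Type*} [NormedAddCommGroup H] [InnerProductSpace ℂ H]
    [CompleteSpace H] (A : H →L[ℂ] H) (hA : A.IsPositive) (ξ : H) (t : ℝ) (ht : 0 ≤ t) :
    ‖ξ - cfc (fun x : ℝ => Real.exp (-t * x)) A ξ‖ ^ 2 ≤
      t * ‖cfc (fun x : ℝ => Real.sqrt x) A ξ‖ ^ 2 := by
  have hA_sa : IsSelfAdjoint A := hA.isSelfAdjoint
  have hspec : ∀ x ∈ spectrum ℝ A, 0 ≤ x :=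
    fun x hx ↦ spectrum_nonneg_of_nonneg ((A.nonneg_iff_isPositive).mpr hA) hx
  have h_sub : ξ - cfc (fun x : ℝ => Real.exp (-t * x)) A ξ =
      cfc (fun x : ℝ => 1 - Real.exp (-t * x)) A ξ := by
    rw [cfc_sub (fun _ : ℝ ↦ 1) (fun x : ℝ ↦ Real.exp (-t * x)) A, cfc_const_one ℝ A]
    rfl
  rw [h_sub]
  refine norm_cfc_apply_sq_le (fun x hx ↦ ?_) (ξ := ξ)
  rw [Real.sq_sqrt (hspec x hx), neg_mul]
  exact one_sub_exp_neg_sq_le (mul_nonneg ht (hspec x hx))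

end QPaper
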